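/- Let n ≥ 3 and let σ be a uniformly random permutation of {1,…,n}. Then interval 1 is never active, and for every i with 2 ≤ i ≤ n−1, the probability that interval i is active equals 1/2. -/

import Mathlib

open Finset

/-- `rnk σ i` is the final (1-based) rank of the `i`-th (1-based) input under the
permutation `σ`; junk value `0` out of range. -/
def rnk {n : ℕ} (σ : Equiv.Perm (Fin n)) (i : ℕ) : ℕ :=
  if h : i - 1 < n then (σ ⟨i - 1, h⟩ : ℕ) + 1 else 0

/-- `relRank σ i` is the relative rank `x_i` of the `i`-th input among the first `i` inputs:
`x_i = |{j : 1 ≤ j ≤ i ∧ σ(j) ≤ σ(i)}|`. -/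
def relRank {n : ℕ} (σ : Equiv.Perm (Fin n)) (i : ℕ) : ℕ :=
  ((Finset.Icc 1 i).filter fun j => rnk σ j ≤ rnk σ i).card

/-- Algorithm OP's active intervals: interval `i` (for `1 ≤ i ≤ n-1`) is active iff
`2 x_i < i + 1`, or `2 x_i = i + 1` and `i ≥ 2` and interval `i-1` is active. -/
def opActive {n : ℕ} (σ : Equiv.Perm (Fin n)) : ℕ → Bool
  | 0 => false
  | i + 1 =>
    (decide (2 * relRank σ (i + 1) < i + 2)) ||
      ((decide (2 * relRank σ (i + 1) = i + 2)) && (decide (2 ≤ i + 1)) && opActive σ i)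

/-- OP's profit `P_OP = Σ_{i=1}^{n-1} (σ(i+1) − σ(i))` over the active intervals `i`. -/
noncomputable def popProfit {n : ℕ} (σ : Equiv.Perm (Fin n)) : ℝ :=
  ∑ i ∈ Finset.Icc 1 (n - 1),
    if opActive σ i then ((rnk σ (i + 1) : ℝ) - rnk σ i) else 0

/-- Expected profit of algorithm OP over a uniformly random permutation of `{1,…,n}`. -/
noncomputable def expPOP (n : ℕ) : ℝ :=
  (∑ σ : Equiv.Perm (Fin n), popProfit σ) / (n.factorial : ℝ)

/-- Harmonic number `H m = Σ_{j=1}^m 1/j`. -/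
noncomputable def harm (m : ℕ) : ℝ := ∑ j ∈ Finset.Icc 1 m, (1 : ℝ) / j

/-- `patternRank σ i j` is the value at `j` of the prefix pattern `pattern_i(σ)`:
`|{j' : 1 ≤ j' ≤ i ∧ σ(j') ≤ σ(j)}|`. -/
def patternRank {n : ℕ} (σ : Equiv.Perm (Fin n)) (i j : ℕ) : ℕ :=
  ((Finset.Icc 1 i).filter fun j' => rnk σ j' ≤ rnk σ j).card

lemma rnk_eq {n : ℕ} (σ : Equiv.Perm (Fin n)) (j : ℕ) (hj1 : 1 ≤ j) (hj2 : j ≤ n) :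
    rnk σ j = (σ ⟨j - 1, by omega⟩ : ℕ) + 1 := by
  simp [rnk, show j - 1 < n by omega]

lemma relRank_add {n : ℕ} (σ : Equiv.Perm (Fin n)) (i : ℕ) (h1 : 1 ≤ i) (h2 : i ≤ n) :
    relRank (Fin.revPerm * σ) i + relRank σ i = i + 1 := by
  classical
  have hiff : ∀ j ∈ Finset.Icc 1 i, ((rnk (Fin.revPerm * σ) j ≤ rnk (Fin.revPerm * σ) i) ↔
      (rnk σ i ≤ rnk σ j)) := by
    intro j hj
    obtain ⟨hj1, hj2⟩ := Finset.mem_Icc.mp hj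
    have hj2' : j ≤ n := le_trans hj2 h2
    rw [rnk_eq σ j hj1 hj2', rnk_eq σ i h1 h2,
        rnk_eq (Fin.revPerm * σ) j hj1 hj2', rnk_eq (Fin.revPerm * σ) i h1 h2]
    simp only [Equiv.Perm.mul_apply, Fin.revPerm_apply, add_le_add_iff_right]
    rw [show ((σ ⟨j-1, by omega⟩).rev : ℕ) ≤ ((σ ⟨i-1, by omega⟩).rev : ℕ)
        ↔ (σ ⟨j-1, by omega⟩).rev ≤ (σ ⟨i-1, by omega⟩).rev from Iff.rfl,
      Fin.rev_le_rev]
    exact Iff.rfl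
  have hinj : ∀ j ∈ Finset.Icc 1 i, (rnk σ j ≤ rnk σ i ∧ rnk σ i ≤ rnk σ j) ↔ j = i := by
    intro j hj
    obtain ⟨hj1, hj2⟩ := Finset.mem_Icc.mp hj
    have hj2' : j ≤ n := le_trans hj2 h2
    rw [rnk_eq σ j hj1 hj2', rnk_eq σ i h1 h2]
    constructor
    · rintro ⟨ha, hb⟩
      have hv : (σ ⟨j-1, by omega⟩ : ℕ) = (σ ⟨i-1, by omega⟩ : ℕ) := by omega
      have : (⟨j-1, by omega⟩ : Fin n) = ⟨i-1, by omega⟩ :=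
        σ.injective (Fin.val_injective hv)
      have h' := congrArg Fin.val this
      simp only at h'
      omega
    · rintro rfl; omega
  -- now count
  have key := Finset.card_union_add_card_inter
    ((Finset.Icc 1 i).filter fun j => rnk (Fin.revPerm * σ) j ≤ rnk (Fin.revPerm * σ) i)
    ((Finset.Icc 1 i).filter fun j => rnk σ j ≤ rnk σ i)
  have hunion : ((Finset.Icc 1 i).filter fun j => rnk (Fin.revPerm * σ) j ≤ rnk (Fin.revPerm * σ) i) ∪
      ((Finset.Icc 1 i).filter fun j => rnk σ j ≤ rnk σ i) = Finset.Icc 1 i := by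
    apply Finset.Subset.antisymm
    · exact Finset.union_subset (Finset.filter_subset _ _) (Finset.filter_subset _ _)
    · intro j hj
      rcases le_total (rnk σ j) (rnk σ i) with h | h
      · exact Finset.mem_union_right _ (Finset.mem_filter.mpr ⟨hj, h⟩)
      · exact Finset.mem_union_left _ (Finset.mem_filter.mpr ⟨hj, (hiff j hj).mpr h⟩)
  have hinter : ((Finset.Icc 1 i).filter fun j => rnk (Fin.revPerm * σ) j ≤ rnk (Fin.revPerm * σ) i) ∩
      ((Finset.Icc 1 i).filter fun j => rnk σ j ≤ rnk σ i) = {i} := by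
    ext j
    simp only [Finset.mem_inter, Finset.mem_filter, Finset.mem_singleton]
    constructor
    · rintro ⟨⟨hj, h1'⟩, ⟨_, h2'⟩⟩
      exact (hinj j hj).mp ⟨h2', (hiff j hj).mp h1'⟩
    · rintro rfl
      refine ⟨⟨?_, le_rfl⟩, ?_, le_rfl⟩ <;> simp only [Finset.mem_Icc] <;> omega
  rw [hunion, hinter] at key
  simp only [Nat.card_Icc, Finset.card_singleton] at key
  unfold relRank
  omega

lemma opActive_succ_iff {n : ℕ} (σ : Equiv.Perm (Fin n)) (i : ℕ) :
    opActive σ (i + 1) = true ↔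
      2 * relRank σ (i + 1) < i + 2 ∨
        (2 * relRank σ (i + 1) = i + 2 ∧ 2 ≤ i + 1 ∧ opActive σ i = true) := by
  simp [opActive, and_assoc]

lemma opActive_rev {n : ℕ} (σ : Equiv.Perm (Fin n)) :
    ∀ i, 2 ≤ i → i ≤ n → (opActive (Fin.revPerm * σ) i = true ↔ ¬ opActive σ i = true) := by
  intro i h2
  induction i, h2 using Nat.le_induction with
  | base =>
    intro h2
    have hadd := relRank_add σ (1+1) (by omega) h2
    rw [show (2:ℕ) = 1 + 1 from rfl, opActive_succ_iff (Fin.revPerm * σ) 1,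
      opActive_succ_iff σ 1]
    have hne : ¬ (2 * relRank σ (1+1) = 1 + 2) := by omega
    have hne' : ¬ (2 * relRank (Fin.revPerm * σ) (1+1) = 1 + 2) := by omega
    simp only [hne, hne', false_and, or_false]
    omega
  | succ i hi ih =>
    intro hn
    have hadd := relRank_add σ (i+1) (by omega) (by omega)
    rw [opActive_succ_iff (Fin.revPerm * σ) i, opActive_succ_iff σ i]
    rcases lt_trichotomy (2 * relRank σ (i+1)) (i+2) with hlt | heq | hgt
    · have : ¬ (2 * relRank (Fin.revPerm * σ) (i+1) < i + 2) := by omega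
      have h2 : ¬ (2 * relRank (Fin.revPerm * σ) (i+1) = i + 2) := by omega
      constructor
      · intro h; omega
      · intro _; omega
    · have h' : 2 * relRank (Fin.revPerm * σ) (i+1) = i + 2 := by omega
      have hflip := ih (by omega)
      constructor
      · rintro (h | ⟨_, _, h⟩)
        · omega
        · intro hc
          rcases hc with hc | ⟨_, _, hc⟩
          · omega
          · exact (hflip.mp h) hc
      · intro h
        refine Or.inr ⟨h', by omega, ?_⟩
        rw [hflip]
        intro hc
        exact h (Or.inr ⟨heq, by omega, hc⟩)
    · have h' : 2 * relRank (Fin.revPerm * σ) (i+1) < i + 2 := by omega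
      constructor
      · intro _; intro hc
        rcases hc with hc | ⟨hc, _⟩ <;> omega
      · intro _; exact Or.inl h'

lemma revPerm_mul_revPerm_mul {n : ℕ} (σ : Equiv.Perm (Fin n)) :
    Fin.revPerm * (Fin.revPerm * σ) = σ := by
  ext x
  simp [Fin.rev_rev]

lemma card_active {n : ℕ} (i : ℕ) (h2 : 2 ≤ i) (hn : i ≤ n) :
    2 * (Finset.univ.filter fun σ : Equiv.Perm (Fin n) => opActive σ i).card = n.factorial := by
  classical
  have key : (Finset.univ.filter fun σ : Equiv.Perm (Fin n) => opActive σ i = true).card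
      = (Finset.univ.filter fun σ : Equiv.Perm (Fin n) => ¬ opActive σ i = true).card := by
    refine Finset.card_bij' (fun σ _ => Fin.revPerm * σ) (fun σ _ => Fin.revPerm * σ)
      ?_ ?_ ?_ ?_
    · intro σ hσ
      rw [Finset.mem_filter] at hσ ⊢
      exact ⟨Finset.mem_univ _, fun hc => ((opActive_rev σ i h2 hn).mp hc) hσ.2⟩
    · intro σ hσ
      rw [Finset.mem_filter] at hσ ⊢
      exact ⟨Finset.mem_univ _, (opActive_rev σ i h2 hn).mpr hσ.2⟩
    · intro σ _; exact revPerm_mul_revPerm_mul σ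
    · intro σ _; exact revPerm_mul_revPerm_mul σ
  have hsplit := Finset.card_filter_add_card_filter_not
    (s := (Finset.univ : Finset (Equiv.Perm (Fin n))))
    (p := fun σ => opActive σ i = true)
  have hcard : (Finset.univ : Finset (Equiv.Perm (Fin n))).card = n.factorial := by
    rw [Finset.card_univ, Fintype.card_perm, Fintype.card_fin]
  omega

lemma relRank_one {n : ℕ} (σ : Equiv.Perm (Fin n)) : relRank σ 1 = 1 := by
  unfold relRank
  rw [Finset.Icc_self, Finset.filter_singleton, if_pos le_rfl, Finset.card_singleton]

lemma opActive_one {n : ℕ} (σ : Equiv.Perm (Fin n)) : opActive σ 1 = false := by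
  show opActive σ (0 + 1) = false
  simp [opActive, relRank_one]

/-- For `n ≥ 3` and a uniformly random permutation of `{1,…,n}`: interval `1` is never
active, and for every `2 ≤ i ≤ n−1` the probability that interval `i` is active is `1/2`. -/
theorem stmt7 (n : ℕ) (hn : 3 ≤ n) :
    (∀ σ : Equiv.Perm (Fin n), opActive σ 1 = false) ∧
      ∀ i, 2 ≤ i → i ≤ n - 1 →
        (((Finset.univ.filter fun σ : Equiv.Perm (Fin n) => opActive σ i).card : ℝ) /
            (n.factorial : ℝ)) = 1 / 2 := by
  refine ⟨fun σ => opActive_one σ, fun i h2 hle => ?_⟩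
  have hc := card_active (n := n) i h2 (by omega)
  have hfac : (0 : ℝ) < (n.factorial : ℝ) := by
    exact_mod_cast Nat.factorial_pos n
  rw [div_eq_div_iff hfac.ne' (by norm_num : (2:ℝ) ≠ 0)]
  have : (2 : ℝ) * ((Finset.univ.filter fun σ : Equiv.Perm (Fin n) => opActive σ i).card : ℝ)
      = (n.factorial : ℝ) := by exact_mod_cast hc
  linarith
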